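/- Lipschitz dependence of the FN log-likelihood on parameters, true versus sieve (Lemma 4, first inequality): let τ, M, M_ν > 0, d ∈ ℕ, Θ ⊆ ℝ a bounded interval, and B = [0, τ·max(e^{M}, e^{M_ν})]. Assume G_θ(x) and log g_θ(x) have partial derivatives in θ and in x that are bounded in absolute value by L on Θ × B. Then there exists a constant C > 0, depending only on τ, M, M_ν and L, such that for all continuous ν₁ : [0,τ]×[−1,1]^d → ℝ with ‖ν₁‖∞ ≤ M, all continuous ν₂ : [0,τ]×[−1,1]^d → ℝ with ‖ν₂‖∞ ≤ M_ν, and all θ₁, θ₂ ∈ Θ: sup over (T,δ,Z) ∈ [0,τ]×{0,1}×[−1,1]^d of |l(T,δ,Z; ν₁,θ₁) − l(T,δ,Z; ν₂,θ₂)| ≤ C·(|θ₁ − θ₂| + ‖ν₁ − ν₂‖∞). -/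
import Mathlib


/-- The FN observed log-likelihood:
`l(T,δ,Z; ν,θ) = δ·log g_θ(∫₀^T e^{ν(s,Z)} ds) + δ·ν(T,Z) − G_θ(∫₀^T e^{ν(s,Z)} ds)`. -/
noncomputable def lFN (d : ℕ) (G g : ℝ → ℝ → ℝ) (ν : ℝ → (Fin d → ℝ) → ℝ)
    (θ T δ : ℝ) (Z : Fin d → ℝ) : ℝ :=
  δ * Real.log (g θ (∫ s in (0:ℝ)..T, Real.exp (ν s Z)))
    + δ * ν T Z
    - G θ (∫ s in (0:ℝ)..T, Real.exp (ν s Z))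

private lemma exp_diff_one_sided {a b E : ℝ} (h : b ≤ a) (ha : Real.exp a ≤ E) :
    Real.exp a - Real.exp b ≤ E * (a - b) := by
  have h1 : Real.exp b = Real.exp a * Real.exp (b - a) := by
    rw [← Real.exp_add]; ring_nf
  have h2 := Real.add_one_le_exp (b - a)
  have h3 := (Real.exp_pos a).le
  nlinarith [mul_le_mul_of_nonneg_left h2 h3,
    mul_nonneg (sub_nonneg.2 ha) (sub_nonneg.2 h)]

private lemma exp_lip {a b E : ℝ} (ha : Real.exp a ≤ E) (hb : Real.exp b ≤ E) :
    |Real.exp a - Real.exp b| ≤ E * |a - b| := by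
  rcases le_total b a with h | h
  · rw [abs_of_nonneg (sub_nonneg.2 (Real.exp_le_exp.2 h)), abs_of_nonneg (sub_nonneg.2 h)]
    exact exp_diff_one_sided h ha
  · rw [abs_sub_comm, abs_sub_comm a b,
      abs_of_nonneg (sub_nonneg.2 (Real.exp_le_exp.2 h)), abs_of_nonneg (sub_nonneg.2 h)]
    exact exp_diff_one_sided h hb

private lemma lip_of_exists_deriv {f : ℝ → ℝ} {s : Set ℝ} {L : ℝ} (hs : Convex ℝ s)
    (h : ∀ x ∈ s, ∃ D, HasDerivWithinAt f D s x ∧ |D| ≤ L) {x y : ℝ}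
    (hx : x ∈ s) (hy : y ∈ s) : |f y - f x| ≤ L * |y - x| := by
  classical
  set f' : ℝ → ℝ := fun x => if hx : x ∈ s then (h x hx).choose else 0 with hf'
  have hd : ∀ x ∈ s, HasDerivWithinAt f (f' x) s x := fun x hx => by
    simp only [hf', dif_pos hx]; exact (h x hx).choose_spec.1
  have hb : ∀ x ∈ s, ‖f' x‖ ≤ L := fun x hx => by
    simp only [hf', dif_pos hx, Real.norm_eq_abs]; exact (h x hx).choose_spec.2
  simpa [Real.norm_eq_abs] using
    hs.norm_image_sub_le_of_norm_hasDerivWithin_le hd hb hx hy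

/-- Lipschitz dependence of the FN log-likelihood on parameters, true versus
sieve element (Lemma 4, first inequality). -/
theorem fn_loglik_lipschitz_true_vs_sieve
    (τ M Mν L : ℝ) (hτ : 0 < τ) (hM : 0 < M) (hMν : 0 < Mν) (hL : 0 < L) :
    ∃ C > 0, ∀ (d : ℕ) (Θ : Set ℝ), Bornology.IsBounded Θ → Θ.OrdConnected →
      ∀ G g : ℝ → ℝ → ℝ,
      -- g is the partial derivative of G in its second argument, and is positive
      (∀ θ ∈ Θ, ∀ x : ℝ, 0 ≤ x →
        HasDerivWithinAt (G θ) (g θ x) (Set.Ici 0) x ∧ 0 < g θ x) →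
      -- |∂G/∂x| = |g| ≤ L on Θ × B, where B = [0, τ·max(e^{M}, e^{Mν})]
      (∀ θ ∈ Θ, ∀ x ∈ Set.Icc (0:ℝ) (τ * max (Real.exp M) (Real.exp Mν)),
        |g θ x| ≤ L) →
      -- |∂G/∂θ| ≤ L on Θ × B
      (∀ θ ∈ Θ, ∀ x ∈ Set.Icc (0:ℝ) (τ * max (Real.exp M) (Real.exp Mν)),
        ∃ D : ℝ, HasDerivWithinAt (fun t => G t x) D Θ θ ∧ |D| ≤ L) →
      -- |∂(log g)/∂x| ≤ L on Θ × B
      (∀ θ ∈ Θ, ∀ x ∈ Set.Icc (0:ℝ) (τ * max (Real.exp M) (Real.exp Mν)),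
        ∃ D : ℝ, HasDerivWithinAt (fun y => Real.log (g θ y))
          D (Set.Icc (0:ℝ) (τ * max (Real.exp M) (Real.exp Mν))) x ∧ |D| ≤ L) →
      -- |∂(log g)/∂θ| ≤ L on Θ × B
      (∀ θ ∈ Θ, ∀ x ∈ Set.Icc (0:ℝ) (τ * max (Real.exp M) (Real.exp Mν)),
        ∃ D : ℝ, HasDerivWithinAt (fun t => Real.log (g t x)) D Θ θ ∧ |D| ≤ L) →
      ∀ ν₁ : ℝ → (Fin d → ℝ) → ℝ,
        ContinuousOn (fun p : ℝ × (Fin d → ℝ) => ν₁ p.1 p.2)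
          (Set.Icc (0:ℝ) τ ×ˢ
            Set.Icc (fun _ : Fin d => (-1:ℝ)) (fun _ : Fin d => (1:ℝ))) →
        (∀ t ∈ Set.Icc (0:ℝ) τ,
          ∀ z ∈ Set.Icc (fun _ : Fin d => (-1:ℝ)) (fun _ : Fin d => (1:ℝ)),
            |ν₁ t z| ≤ M) →
      ∀ ν₂ : ℝ → (Fin d → ℝ) → ℝ,
        ContinuousOn (fun p : ℝ × (Fin d → ℝ) => ν₂ p.1 p.2)
          (Set.Icc (0:ℝ) τ ×ˢ
            Set.Icc (fun _ : Fin d => (-1:ℝ)) (fun _ : Fin d => (1:ℝ))) →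
        (∀ t ∈ Set.Icc (0:ℝ) τ,
          ∀ z ∈ Set.Icc (fun _ : Fin d => (-1:ℝ)) (fun _ : Fin d => (1:ℝ)),
            |ν₂ t z| ≤ Mν) →
      ∀ θ₁ ∈ Θ, ∀ θ₂ ∈ Θ,
      ∀ T ∈ Set.Icc (0:ℝ) τ, ∀ δ : ℝ, (δ = 0 ∨ δ = 1) →
      ∀ Z ∈ Set.Icc (fun _ : Fin d => (-1:ℝ)) (fun _ : Fin d => (1:ℝ)),
        |lFN d G g ν₁ θ₁ T δ Z - lFN d G g ν₂ θ₂ T δ Z| ≤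
          C * (|θ₁ - θ₂|
            + sSup ((fun p : ℝ × (Fin d → ℝ) => |ν₁ p.1 p.2 - ν₂ p.1 p.2|) ''
                (Set.Icc (0:ℝ) τ ×ˢ
                  Set.Icc (fun _ : Fin d => (-1:ℝ)) (fun _ : Fin d => (1:ℝ))))) := by
  classical
  set E : ℝ := max (Real.exp M) (Real.exp Mν) with hEdef
  have hE0 : 0 < E := lt_max_of_lt_left (Real.exp_pos M)
  have hEM : Real.exp M ≤ E := le_max_left _ _
  have hEMν : Real.exp Mν ≤ E := le_max_right _ _
  refine ⟨2*L + 2*L*(τ*E) + 1, by nlinarith [mul_pos (mul_pos hL hτ) hE0], ?_⟩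
  intro d Θ hΘbdd hΘord G g hg hgL hGθ hlogx hlogθ ν₁ hν₁c hν₁b ν₂ hν₂c hν₂b
    θ₁ hθ₁ θ₂ hθ₂ T hT δ hδ Z hZ
  set K' := Set.Icc (fun _ : Fin d => (-1:ℝ)) (fun _ : Fin d => (1:ℝ)) with hK
  set S := sSup ((fun p : ℝ × (Fin d → ℝ) => |ν₁ p.1 p.2 - ν₂ p.1 p.2|) ''
      (Set.Icc (0:ℝ) τ ×ˢ K')) with hSdef
  have hbdd : BddAbove ((fun p : ℝ × (Fin d → ℝ) => |ν₁ p.1 p.2 - ν₂ p.1 p.2|) ''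
      (Set.Icc (0:ℝ) τ ×ˢ K')) := by
    refine ⟨M + Mν, ?_⟩
    rintro _ ⟨⟨t, z⟩, ⟨ht, hz⟩, rfl⟩
    have h1 := hν₁b t ht z hz
    have h2 := hν₂b t ht z hz
    have := abs_sub (ν₁ t z) (ν₂ t z)
    dsimp only
    linarith
  have hSle : ∀ t ∈ Set.Icc (0:ℝ) τ, ∀ z ∈ K', |ν₁ t z - ν₂ t z| ≤ S :=
    fun t ht z hz => le_csSup hbdd ⟨(t, z), ⟨ht, hz⟩, rfl⟩
  have hS0 : 0 ≤ S := (abs_nonneg _).trans (hSle T hT Z hZ)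
  have hT0 : (0:ℝ) ≤ T := hT.1
  have hTτ : T ≤ τ := hT.2
  have hsub : Set.Icc (0:ℝ) T ⊆ Set.Icc 0 τ := Set.Icc_subset_Icc le_rfl hTτ
  have hmaps : ∀ s ∈ Set.Icc (0:ℝ) τ,
      ((s, Z) : ℝ × (Fin d → ℝ)) ∈ Set.Icc (0:ℝ) τ ×ˢ K' := fun s hs => ⟨hs, hZ⟩
  have hc1 : ContinuousOn (fun s => ν₁ s Z) (Set.Icc (0:ℝ) τ) :=
    hν₁c.comp ((continuous_id.prodMk continuous_const).continuousOn) hmaps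
  have hc2 : ContinuousOn (fun s => ν₂ s Z) (Set.Icc (0:ℝ) τ) :=
    hν₂c.comp ((continuous_id.prodMk continuous_const).continuousOn) hmaps
  have huIcc : Set.uIcc (0:ℝ) T = Set.Icc 0 T := Set.uIcc_of_le hT0
  have hi1 : IntervalIntegrable (fun s => Real.exp (ν₁ s Z)) MeasureTheory.volume 0 T := by
    apply ContinuousOn.intervalIntegrable
    rw [huIcc]
    exact Real.continuous_exp.comp_continuousOn (hc1.mono hsub)
  have hi2 : IntervalIntegrable (fun s => Real.exp (ν₂ s Z)) MeasureTheory.volume 0 T := by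
    apply ContinuousOn.intervalIntegrable
    rw [huIcc]
    exact Real.continuous_exp.comp_continuousOn (hc2.mono hsub)
  set x₁ := ∫ s in (0:ℝ)..T, Real.exp (ν₁ s Z) with hx₁def
  set x₂ := ∫ s in (0:ℝ)..T, Real.exp (ν₂ s Z) with hx₂def
  have hxmem : ∀ (νf : ℝ → (Fin d → ℝ) → ℝ) (Mf : ℝ),
      (∀ t ∈ Set.Icc (0:ℝ) τ, ∀ z ∈ K', |νf t z| ≤ Mf) → Real.exp Mf ≤ E →
      IntervalIntegrable (fun s => Real.exp (νf s Z)) MeasureTheory.volume 0 T →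
      (∫ s in (0:ℝ)..T, Real.exp (νf s Z)) ∈ Set.Icc (0:ℝ) (τ * E) := by
    intro νf Mf hb hEb hi
    constructor
    · exact intervalIntegral.integral_nonneg hT0 (fun s _ => (Real.exp_pos _).le)
    · have h1 : (∫ s in (0:ℝ)..T, Real.exp (νf s Z)) ≤ ∫ _ in (0:ℝ)..T, E := by
        refine intervalIntegral.integral_mono_on hT0 hi intervalIntegrable_const ?_
        intro s hs
        exact (Real.exp_le_exp.2 ((abs_le.1 (hb s (hsub hs) Z hZ)).2)).trans hEb
      rw [intervalIntegral.integral_const, smul_eq_mul] at h1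
      have : (T - 0) * E ≤ τ * E := by
        apply mul_le_mul_of_nonneg_right _ hE0.le
        linarith
      linarith
  have hx₁mem : x₁ ∈ Set.Icc (0:ℝ) (τ * E) := hxmem ν₁ M hν₁b hEM hi1
  have hx₂mem : x₂ ∈ Set.Icc (0:ℝ) (τ * E) := hxmem ν₂ Mν hν₂b hEMν hi2
  have hΔx : |x₁ - x₂| ≤ τ * E * S := by
    have hsubint : x₁ - x₂
        = ∫ s in (0:ℝ)..T, (Real.exp (ν₁ s Z) - Real.exp (ν₂ s Z)) :=
      (intervalIntegral.integral_sub hi1 hi2).symm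
    rw [hsubint]
    have h1 : |∫ s in (0:ℝ)..T, (Real.exp (ν₁ s Z) - Real.exp (ν₂ s Z))|
        ≤ ∫ s in (0:ℝ)..T, |Real.exp (ν₁ s Z) - Real.exp (ν₂ s Z)| :=
      intervalIntegral.abs_integral_le_integral_abs hT0
    have h2 : (∫ s in (0:ℝ)..T, |Real.exp (ν₁ s Z) - Real.exp (ν₂ s Z)|)
        ≤ ∫ _ in (0:ℝ)..T, E * S := by
      refine intervalIntegral.integral_mono_on hT0 (hi1.sub hi2).abs
        intervalIntegrable_const ?_
      intro s hs
      have ha : Real.exp (ν₁ s Z) ≤ E :=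
        (Real.exp_le_exp.2 ((abs_le.1 (hν₁b s (hsub hs) Z hZ)).2)).trans hEM
      have hb : Real.exp (ν₂ s Z) ≤ E :=
        (Real.exp_le_exp.2 ((abs_le.1 (hν₂b s (hsub hs) Z hZ)).2)).trans hEMν
      calc |Real.exp (ν₁ s Z) - Real.exp (ν₂ s Z)|
          ≤ E * |ν₁ s Z - ν₂ s Z| := exp_lip ha hb
        _ ≤ E * S := mul_le_mul_of_nonneg_left (hSle s (hsub hs) Z hZ) hE0.le
    rw [intervalIntegral.integral_const, smul_eq_mul] at h2
    have h3 : (T - 0) * (E * S) ≤ τ * E * S := by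
      have := mul_le_mul_of_nonneg_right hTτ (mul_nonneg hE0.le hS0)
      linarith
    linarith
  have hΘconv : Convex ℝ Θ := hΘord.convex
  have hBconv : Convex ℝ (Set.Icc (0:ℝ) (τ * E)) := convex_Icc _ _
  -- G Lipschitz in x (at θ₂)
  have hGx : |G θ₂ x₁ - G θ₂ x₂| ≤ L * |x₁ - x₂| := by
    have hd : ∀ x ∈ Set.Icc (0:ℝ) (τ * E),
        HasDerivWithinAt (G θ₂) (g θ₂ x) (Set.Icc (0:ℝ) (τ * E)) x :=
      fun x hx => ((hg θ₂ hθ₂ x hx.1).1).mono Set.Icc_subset_Ici_self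
    have hb : ∀ x ∈ Set.Icc (0:ℝ) (τ * E), ‖g θ₂ x‖ ≤ L := fun x hx => by
      rw [Real.norm_eq_abs]; exact hgL θ₂ hθ₂ x hx
    simpa [Real.norm_eq_abs] using
      hBconv.norm_image_sub_le_of_norm_hasDerivWithin_le hd hb hx₂mem hx₁mem
  -- G Lipschitz in θ (at x₁)
  have hGt : |G θ₁ x₁ - G θ₂ x₁| ≤ L * |θ₁ - θ₂| :=
    lip_of_exists_deriv hΘconv (fun θ hθ => hGθ θ hθ x₁ hx₁mem) hθ₂ hθ₁
  -- log g Lipschitz in x (at θ₂)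
  have hlgx : |Real.log (g θ₂ x₁) - Real.log (g θ₂ x₂)| ≤ L * |x₁ - x₂| :=
    lip_of_exists_deriv hBconv (fun x hx => hlogx θ₂ hθ₂ x hx) hx₂mem hx₁mem
  -- log g Lipschitz in θ (at x₁)
  have hlgt : |Real.log (g θ₁ x₁) - Real.log (g θ₂ x₁)| ≤ L * |θ₁ - θ₂| :=
    lip_of_exists_deriv hΘconv (fun θ hθ => hlogθ θ hθ x₁ hx₁mem) hθ₂ hθ₁
  have hLΔx : L * |x₁ - x₂| ≤ L * (τ * E * S) := mul_le_mul_of_nonneg_left hΔx hL.le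
  have hlgd : |Real.log (g θ₁ x₁) - Real.log (g θ₂ x₂)|
      ≤ L * |θ₁ - θ₂| + L * (τ * E * S) := by
    have := abs_sub_le (Real.log (g θ₁ x₁)) (Real.log (g θ₂ x₁)) (Real.log (g θ₂ x₂))
    linarith
  have hGd : |G θ₁ x₁ - G θ₂ x₂| ≤ L * |θ₁ - θ₂| + L * (τ * E * S) := by
    have := abs_sub_le (G θ₁ x₁) (G θ₂ x₁) (G θ₂ x₂)
    linarith
  have hνd : |ν₁ T Z - ν₂ T Z| ≤ S := hSle T hT Z hZ
  have hδ1 : |δ| ≤ 1 := by rcases hδ with h | h <;> simp [h]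
  have expand : lFN d G g ν₁ θ₁ T δ Z - lFN d G g ν₂ θ₂ T δ Z
      = δ * (Real.log (g θ₁ x₁) - Real.log (g θ₂ x₂)) + δ * (ν₁ T Z - ν₂ T Z)
        - (G θ₁ x₁ - G θ₂ x₂) := by
    simp only [lFN, ← hx₁def, ← hx₂def]; ring
  rw [expand]
  have tri : |δ * (Real.log (g θ₁ x₁) - Real.log (g θ₂ x₂)) + δ * (ν₁ T Z - ν₂ T Z)
        - (G θ₁ x₁ - G θ₂ x₂)|
      ≤ |δ| * |Real.log (g θ₁ x₁) - Real.log (g θ₂ x₂)| + |δ| * |ν₁ T Z - ν₂ T Z|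
        + |G θ₁ x₁ - G θ₂ x₂| := by
    have h1 := abs_sub (δ * (Real.log (g θ₁ x₁) - Real.log (g θ₂ x₂))
      + δ * (ν₁ T Z - ν₂ T Z)) (G θ₁ x₁ - G θ₂ x₂)
    have h2 := abs_add_le (δ * (Real.log (g θ₁ x₁) - Real.log (g θ₂ x₂)))
      (δ * (ν₁ T Z - ν₂ T Z))
    rw [abs_mul, abs_mul] at h2
    linarith
  have hm1 : |δ| * |Real.log (g θ₁ x₁) - Real.log (g θ₂ x₂)|
      ≤ |Real.log (g θ₁ x₁) - Real.log (g θ₂ x₂)| :=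
    mul_le_of_le_one_left (abs_nonneg _) hδ1
  have hm2 : |δ| * |ν₁ T Z - ν₂ T Z| ≤ |ν₁ T Z - ν₂ T Z| :=
    mul_le_of_le_one_left (abs_nonneg _) hδ1
  have hθabs : (0:ℝ) ≤ |θ₁ - θ₂| := abs_nonneg _
  nlinarith [tri, hm1, hm2, hlgd, hGd, hνd, hS0, hθabs,
    mul_nonneg hL.le hS0,
    mul_nonneg (mul_nonneg (mul_nonneg hL.le hτ.le) hE0.le) hθabs,
    mul_nonneg hL.le hθabs,
    mul_nonneg (mul_nonneg (mul_nonneg hL.le hτ.le) hE0.le) hS0]
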